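/- Let d_A, d_B ≥ 1 and let P : M_{dA}(ℂ) → M_{dB}(ℂ) be a linear map such that for every n ∈ ℕ the n-fold tensor power P^{⊗n} is decomposable. Then P is completely positive or completely copositive. -/

import Mathlib

open scoped ComplexOrder Kronecker Matrix

namespace TensorDecomp

/-- The Choi matrix of a linear map between matrix algebras. -/
noncomputable def choi {A B : Type} [Fintype A] [DecidableEq A]
    (L : Matrix A A ℂ →ₗ[ℂ] Matrix B B ℂ) : Matrix (A × B) (A × B) ℂ :=
  fun p q => L (Matrix.single p.1 q.1 1) p.2 q.2

/-- A map is positive if it maps positive semidefinite matrices to positive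
semidefinite matrices. -/
def IsPositiveMap {A B : Type} [Fintype A] [Fintype B]
    (L : Matrix A A ℂ →ₗ[ℂ] Matrix B B ℂ) : Prop :=
  ∀ X : Matrix A A ℂ, X.PosSemidef → (L X).PosSemidef

/-- A map is completely positive iff its Choi matrix is positive semidefinite. -/
def IsCompletelyPositive {A B : Type} [Fintype A] [DecidableEq A] [Fintype B]
    (L : Matrix A A ℂ →ₗ[ℂ] Matrix B B ℂ) : Prop :=
  (choi L).PosSemidef

/-- Matrix transposition as a linear map. -/
def transposeMap (A : Type) : Matrix A A ℂ →ₗ[ℂ] Matrix A A ℂ where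
  toFun X := X.transpose
  map_add' X Y := Matrix.transpose_add X Y
  map_smul' c X := Matrix.transpose_smul c X

/-- A map is completely copositive iff transposition composed with it is
completely positive. -/
def IsCompletelyCopositive {A B : Type} [Fintype A] [DecidableEq A] [Fintype B]
    (L : Matrix A A ℂ →ₗ[ℂ] Matrix B B ℂ) : Prop :=
  IsCompletelyPositive (transposeMap B ∘ₗ L)

/-- A map is decomposable iff it is the sum of a completely positive map and the
transposition composed with a completely positive map. -/
def IsDecomposable {A B : Type} [Fintype A] [DecidableEq A] [Fintype B]
    (L : Matrix A A ℂ →ₗ[ℂ] Matrix B B ℂ) : Prop :=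
  ∃ T₁ T₂ : Matrix A A ℂ →ₗ[ℂ] Matrix B B ℂ,
    IsCompletelyPositive T₁ ∧ IsCompletelyPositive T₂ ∧ L = T₁ + transposeMap B ∘ₗ T₂

/-- The tensor product of a finite family of linear maps between matrix algebras,
characterized by `(⊗ₜ L t) (⊗ₜ X t) = ⊗ₜ (L t (X t))`. -/
noncomputable def mapTensorFamily {ι : Type} [Fintype ι] [DecidableEq ι]
    {κ κ' : Type} [Fintype κ] [DecidableEq κ]
    (L : ι → (Matrix κ κ ℂ →ₗ[ℂ] Matrix κ' κ' ℂ)) :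
    Matrix (ι → κ) (ι → κ) ℂ →ₗ[ℂ] Matrix (ι → κ') (ι → κ') ℂ where
  toFun X := fun k l => ∑ i : ι → κ, ∑ j : ι → κ,
    X i j * ∏ t, L t (Matrix.single (i t) (j t) 1) (k t) (l t)
  map_add' X Y := by
    funext k l
    erw [Pi.add_apply, Pi.add_apply]
    simp [Matrix.add_apply, add_mul, Finset.sum_add_distrib]
  map_smul' c X := by
    funext k l
    erw [Pi.smul_apply, Pi.smul_apply]
    simp [Matrix.smul_apply, smul_eq_mul, Finset.mul_sum, mul_assoc]

/-- The `n`-th tensor power of a linear map between matrix algebras. -/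
noncomputable def mapTensorPow {κ κ' : Type} [Fintype κ] [DecidableEq κ]
    (L : Matrix κ κ ℂ →ₗ[ℂ] Matrix κ' κ' ℂ) (n : ℕ) :
    Matrix (Fin n → κ) (Fin n → κ) ℂ →ₗ[ℂ] Matrix (Fin n → κ') (Fin n → κ') ℂ :=
  mapTensorFamily (fun _ : Fin n => L)

/-- The tensor product of two linear maps between matrix algebras, characterized by
`(L₁ ⊗ L₂)(X ⊗ Y) = L₁(X) ⊗ L₂(Y)`. -/
noncomputable def mapTensor {A B C D : Type} [Fintype A] [DecidableEq A]
    [Fintype C] [DecidableEq C]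
    (L₁ : Matrix A A ℂ →ₗ[ℂ] Matrix B B ℂ) (L₂ : Matrix C C ℂ →ₗ[ℂ] Matrix D D ℂ) :
    Matrix (A × C) (A × C) ℂ →ₗ[ℂ] Matrix (B × D) (B × D) ℂ where
  toFun X := fun k l => ∑ i : A × C, ∑ j : A × C,
    X i j * (L₁ (Matrix.single i.1 j.1 1) k.1 l.1 *
      L₂ (Matrix.single i.2 j.2 1) k.2 l.2)
  map_add' X Y := by
    funext k l
    erw [Pi.add_apply, Pi.add_apply]
    simp [Matrix.add_apply, add_mul, Finset.sum_add_distrib]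
  map_smul' c X := by
    funext k l
    erw [Pi.smul_apply, Pi.smul_apply]
    simp [Matrix.smul_apply, smul_eq_mul, Finset.mul_sum, mul_assoc]

/-- The adjoint of a linear map between matrix algebras with respect to the
Hilbert-Schmidt inner product `⟨A, B⟩ = Tr[Aᴴ B]`. -/
noncomputable def hsAdjoint {A B : Type} [Fintype A] [DecidableEq A] [Fintype B]
    (T : Matrix A A ℂ →ₗ[ℂ] Matrix B B ℂ) : Matrix B B ℂ →ₗ[ℂ] Matrix A A ℂ where
  toFun Y := fun i j => ((T (Matrix.single i j 1))ᴴ * Y).trace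
  map_add' X Y := by
    funext i j
    erw [Pi.add_apply, Pi.add_apply]
    simp [Matrix.mul_add, Matrix.add_apply]
  map_smul' c X := by
    funext i j
    erw [Pi.smul_apply, Pi.smul_apply]
    simp [Matrix.mul_smul, Matrix.smul_apply]

/-- The quantity `μ(P)` from Definition 2 of the paper. -/
noncomputable def mu {A B : Type} [Fintype A] [DecidableEq A] [Fintype B] [DecidableEq B]
    (P : Matrix A A ℂ →ₗ[ℂ] Matrix B B ℂ) : ℝ :=
  sInf { r : ℝ | ∃ T : Matrix A A ℂ →ₗ[ℂ] Matrix B B ℂ,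
    IsCompletelyPositive T ∧ hsAdjoint T (P 1) ≠ 0 ∧
    r = ((choi P * choi T).trace).re / ((hsAdjoint T (P 1)).trace).re }

/-- The unique linear map with the given Choi matrix. -/
noncomputable def ofChoi {A B : Type} [Fintype A] [Fintype B]
    (C : Matrix (A × B) (A × B) ℂ) : Matrix A A ℂ →ₗ[ℂ] Matrix B B ℂ where
  toFun X := fun k l => ∑ i : A, ∑ j : A, X i j * C (i, k) (j, l)
  map_add' X Y := by
    funext k l
    erw [Pi.add_apply, Pi.add_apply]
    simp [Matrix.add_apply, add_mul, Finset.sum_add_distrib]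
  map_smul' c X := by
    funext k l
    erw [Pi.smul_apply, Pi.smul_apply]
    simp [Matrix.smul_apply, smul_eq_mul, Finset.mul_sum, mul_assoc]

/-- The flip operator on `ℂ^d ⊗ ℂ^d`. -/
def flipOp (d : ℕ) : Matrix (Fin d × Fin d) (Fin d × Fin d) ℂ :=
  fun p q => if p.1 = q.2 ∧ p.2 = q.1 then 1 else 0

/-- The projection onto the symmetric subspace of `ℂ^d ⊗ ℂ^d`. -/
noncomputable def Psym (d : ℕ) : Matrix (Fin d × Fin d) (Fin d × Fin d) ℂ :=
  (1 / 2 : ℂ) • (1 + flipOp d)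

/-- The projection onto the antisymmetric subspace of `ℂ^d ⊗ ℂ^d`. -/
noncomputable def Pasym (d : ℕ) : Matrix (Fin d × Fin d) (Fin d × Fin d) ℂ :=
  (1 / 2 : ℂ) • (1 - flipOp d)

/-- The (unnormalized to trace one) Werner state with parameter `p`. -/
noncomputable def wernerState (d : ℕ) (p : ℝ) :
    Matrix (Fin d × Fin d) (Fin d × Fin d) ℂ :=
  ((p : ℂ) / ((d : ℂ) * ((d : ℂ) + 1) / 2)) • Psym d +
    (((1 - p : ℝ) : ℂ) / ((d : ℂ) * ((d : ℂ) - 1) / 2)) • Pasym d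

/-- The Werner map `W_p`, i.e. the unique linear map whose Choi matrix is the
Werner state `ρ_W(p)`. -/
noncomputable def wernerMap (d : ℕ) (p : ℝ) :
    Matrix (Fin d) (Fin d) ℂ →ₗ[ℂ] Matrix (Fin d) (Fin d) ℂ :=
  ofChoi (wernerState d p)

/-- Partial transposition (on the second tensor factor) of a bipartite matrix. -/
def ptranspose {A B : Type} (X : Matrix (A × B) (A × B) ℂ) :
    Matrix (A × B) (A × B) ℂ :=
  fun p q => X (p.1, q.2) (q.1, p.2)

/-- Partial transposition of all `B`-systems of a multipartite matrix whose
subsystems each consist of an `A`-part (first factor) and a `B`-part (second factor). -/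
def ptransposeAll {ι A B : Type} (X : Matrix (ι → A × B) (ι → A × B) ℂ) :
    Matrix (ι → A × B) (ι → A × B) ℂ :=
  fun p q => X (fun t => ((p t).1, (q t).2)) (fun t => ((q t).1, (p t).2))

/-- The tensor product of a finite family of matrices. -/
def tensorFamily {ι : Type} [Fintype ι] {κ : Type} (M : ι → Matrix κ κ ℂ) :
    Matrix (ι → κ) (ι → κ) ℂ :=
  fun p q => ∏ t, M t (p t) (q t)

/-- The normalized projections `P₀ = P_sym / d_sym` and `P₁ = P_asym / d_asym`. -/
noncomputable def Pnorm (d : ℕ) : Fin 2 → Matrix (Fin d × Fin d) (Fin d × Fin d) ℂ :=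
  ![((d : ℂ) * ((d : ℂ) + 1) / 2)⁻¹ • Psym d, ((d : ℂ) * ((d : ℂ) - 1) / 2)⁻¹ • Pasym d]

/-- The matrices `F(k,l)` from equation (10) of the paper (with `k, l` 0-based). -/
noncomputable def Fmat (d n m : ℕ) (k : Fin (n + 1)) (l : Fin (m + 1)) :
    Matrix ((Fin n ⊕ Fin m) → Fin d × Fin d) ((Fin n ⊕ Fin m) → Fin d × Fin d) ℂ :=
  ((Nat.factorial n * Nat.factorial m : ℂ))⁻¹ • ∑ f : (Fin n ⊕ Fin m) → Fin 2,
    if (∑ t : Fin n, ((f (Sum.inl t)) : ℕ)) = (k : ℕ) ∧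
        (∑ s : Fin m, ((f (Sum.inr s)) : ℕ)) = (l : ℕ) then
      tensorFamily (fun t => match t with
        | Sum.inl _ => Pnorm d (f t)
        | Sum.inr _ => ptranspose (Pnorm d (f t)))
    else 0

/-- The matrix `H_Q` from equation (9) of the paper (with indices 0-based). -/
noncomputable def HQ (d n m : ℕ) (Q : Matrix (Fin (n + 1)) (Fin (m + 1)) ℝ) :
    Matrix ((Fin n ⊕ Fin m) → Fin d × Fin d) ((Fin n ⊕ Fin m) → Fin d × Fin d) ℂ :=
  ∑ k : Fin (n + 1), ∑ l : Fin (m + 1), (Q k l : ℂ) • Fmat d n m k l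

/-- The matrix `V^m_d` from equation (8) of the paper (with indices 0-based). -/
noncomputable def Vmat (m d : ℕ) : Matrix (Fin (m + 1)) (Fin (m + 1)) ℝ :=
  fun a b => (-1 : ℝ) ^ (a : ℕ) *
    ∑ t ∈ Finset.Icc ((a : ℕ) + (b : ℕ) - m) (min (a : ℕ) (b : ℕ)),
      ((a : ℕ).choose t : ℝ) * ((m - (a : ℕ)).choose ((b : ℕ) - t) : ℝ) *
        (-(((d : ℝ) + 1) / ((d : ℝ) - 1))) ^ t

/-- The vector `v^n_p` from equation (12) of the paper (with index 0-based). -/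
noncomputable def vvec (d n : ℕ) (p : ℝ) : Fin (n + 1) → ℝ :=
  fun k => (((d : ℝ) + 1) / ((d : ℝ) - 1)) ^ (k : ℕ) * (1 - p) ^ (k : ℕ) * p ^ (n - (k : ℕ))

/-- The mixed tensor power `W_{p₁}^{⊗n} ⊗ (ϑ ∘ W_{p₂})^{⊗m}` of Werner maps. -/
noncomputable def wernerMixed (d n m : ℕ) (p₁ p₂ : ℝ) :
    Matrix ((Fin n ⊕ Fin m) → Fin d) ((Fin n ⊕ Fin m) → Fin d) ℂ →ₗ[ℂ]
      Matrix ((Fin n ⊕ Fin m) → Fin d) ((Fin n ⊕ Fin m) → Fin d) ℂ :=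
  mapTensorFamily (fun t => match t with
    | Sum.inl _ => wernerMap d p₁
    | Sum.inr _ => transposeMap (Fin d) ∘ₗ wernerMap d p₂)

set_option linter.unusedSectionVars false

section Aux

open Matrix Finset

variable {κA κB : Type} [Fintype κA] [DecidableEq κA] [Fintype κB] [DecidableEq κB]

/-- Reindexing equivalence used for the partial transpose trace identity. -/
def eSwap (κA κB : Type) : ((κA × κB) × (κA × κB)) ≃ ((κA × κB) × (κA × κB)) where
  toFun z := ((z.1.1, z.2.2), (z.2.1, z.1.2))
  invFun z := ((z.1.1, z.2.2), (z.2.1, z.1.2))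
  left_inv := fun ⟨⟨_, _⟩, ⟨_, _⟩⟩ => rfl
  right_inv := fun ⟨⟨_, _⟩, ⟨_, _⟩⟩ => rfl

/-- Reindexing equivalence used for the Cauchy–Schwarz bound. -/
def eQuad (κA κB : Type) : ((κB × κB) × (κA × κA)) ≃ ((κA × κB) × (κA × κB)) where
  toFun z := ((z.2.1, z.1.1), (z.2.2, z.1.2))
  invFun z := ((z.1.2, z.2.2), (z.1.1, z.2.1))
  left_inv := fun ⟨⟨_, _⟩, ⟨_, _⟩⟩ => rfl
  right_inv := fun ⟨⟨_, _⟩, ⟨_, _⟩⟩ => rfl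

/-- Reindexing equivalence used for the trace factorization over tensor powers. -/
def eFam (N : ℕ) (κA κB : Type) :
    (((Fin N → κA) × (Fin N → κB)) × ((Fin N → κA) × (Fin N → κB)))
      ≃ (Fin N → ((κA × κB) × (κA × κB))) where
  toFun z t := ((z.1.1 t, z.1.2 t), (z.2.1 t, z.2.2 t))
  invFun F := ((fun t => (F t).1.1, fun t => (F t).1.2),
               (fun t => (F t).2.1, fun t => (F t).2.2))
  left_inv z := rfl
  right_inv F := rfl

/-! ### Basic facts about `ptranspose` -/

lemma ptranspose_ptranspose (X : Matrix (κA × κB) (κA × κB) ℂ) :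
    ptranspose (ptranspose X) = X := rfl

lemma ptranspose_add (X Y : Matrix (κA × κB) (κA × κB) ℂ) :
    ptranspose (X + Y) = ptranspose X + ptranspose Y := rfl

lemma ptranspose_smul (c : ℂ) (X : Matrix (κA × κB) (κA × κB) ℂ) :
    ptranspose (c • X) = c • ptranspose X := rfl

lemma ptranspose_one :
    ptranspose (1 : Matrix (κA × κB) (κA × κB) ℂ) = 1 := by
  ext ⟨a, b⟩ ⟨c, d⟩
  by_cases h1 : a = c <;> by_cases h2 : b = d <;>
    simp [ptranspose, Matrix.one_apply, Prod.ext_iff, h1, h2] <;> tauto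

lemma ptranspose_isHermitian {X : Matrix (κA × κB) (κA × κB) ℂ} (h : X.IsHermitian) :
    (ptranspose X).IsHermitian := by
  ext ⟨a, b⟩ ⟨c, d⟩
  simpa [ptranspose, Matrix.conjTranspose_apply] using h.apply (a, d) (c, b)

lemma trace_mul_ptranspose (X Y : Matrix (κA × κB) (κA × κB) ℂ) :
    (X * ptranspose Y).trace = (ptranspose X * Y).trace := by
  calc (X * ptranspose Y).trace
      = ∑ z : (κA × κB) × (κA × κB), X z.1 z.2 * Y (z.2.1, z.1.2) (z.1.1, z.2.2) := by
        simp only [Matrix.trace, Matrix.diag, Matrix.mul_apply, ptranspose]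
        exact (Fintype.sum_prod_type (fun z : (κA × κB) × (κA × κB) =>
          X z.1 z.2 * Y (z.2.1, z.1.2) (z.1.1, z.2.2))).symm
    _ = ∑ z : (κA × κB) × (κA × κB), X (z.1.1, z.2.2) (z.2.1, z.1.2) * Y z.2 z.1 :=
        Fintype.sum_equiv (eSwap κA κB) _ _ (by rintro ⟨⟨a, b⟩, ⟨c, d⟩⟩; rfl)
    _ = (ptranspose X * Y).trace := by
        simp only [Matrix.trace, Matrix.diag, Matrix.mul_apply, ptranspose]
        exact Fintype.sum_prod_type (fun z : (κA × κB) × (κA × κB) =>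
          X (z.1.1, z.2.2) (z.2.1, z.1.2) * Y z.2 z.1)

/-! ### Positive semidefinite helper lemmas -/

lemma psd_diag_nonneg {n : Type} [Fintype n] [DecidableEq n] {M : Matrix n n ℂ}
    (h : M.PosSemidef) (i : n) : 0 ≤ M i i := by
  simpa [Matrix.mulVec, dotProduct, Pi.single_apply, apply_ite, mul_ite, ite_mul]
    using h.dotProduct_mulVec_nonneg (Pi.single i 1)

lemma psd_trace_nonneg {n : Type} [Fintype n] [DecidableEq n] {M : Matrix n n ℂ}
    (h : M.PosSemidef) : 0 ≤ M.trace :=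
  Finset.sum_nonneg fun i _ => psd_diag_nonneg h i

open scoped MatrixOrder Matrix.Norms.L2Operator in
lemma psd_eq_conjTranspose_mul_self {n : Type} [Fintype n] [DecidableEq n] {M : Matrix n n ℂ}
    (h : M.PosSemidef) : ∃ B : Matrix n n ℂ, M = Bᴴ * B :=
  CStarAlgebra.nonneg_iff_eq_star_mul_self.mp h.nonneg

lemma psd_trace_mul_nonneg {n : Type} [Fintype n] [DecidableEq n] {S T : Matrix n n ℂ}
    (hS : S.PosSemidef) (hT : T.PosSemidef) : 0 ≤ (S * T).trace := by
  obtain ⟨Bm, hB⟩ := psd_eq_conjTranspose_mul_self hT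
  rw [hB, ← Matrix.mul_assoc, Matrix.trace_mul_comm, ← Matrix.mul_assoc]
  exact psd_trace_nonneg (hS.mul_mul_conjTranspose_same Bm)

lemma herm_quad_conj {n : Type} [Fintype n] {M : Matrix n n ℂ} (h : M.IsHermitian)
    (v : n → ℂ) :
    (starRingEnd ℂ) (star v ⬝ᵥ M.mulVec v) = star v ⬝ᵥ M.mulVec v := by
  simp only [dotProduct, Matrix.mulVec, Pi.star_apply, Finset.mul_sum, map_sum]
  rw [Finset.sum_comm]
  refine Finset.sum_congr rfl fun j _ => Finset.sum_congr rfl fun i _ => ?_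
  have hM : (starRingEnd ℂ) (M i j) = M j i := h.apply j i
  simp only [_root_.map_mul, hM, RCLike.star_def, Complex.conj_conj]
  ring

lemma herm_quad_real {n : Type} [Fintype n] {M : Matrix n n ℂ} (h : M.IsHermitian)
    (v : n → ℂ) :
    star v ⬝ᵥ M.mulVec v = (((star v ⬝ᵥ M.mulVec v).re : ℝ) : ℂ) :=
  (Complex.conj_eq_iff_re.mp (herm_quad_conj h v)).symm

lemma exists_neg_quad {n : Type} [Fintype n] {M : Matrix n n ℂ} (hH : M.IsHermitian)
    (h : ¬ M.PosSemidef) : ∃ v, (star v ⬝ᵥ M.mulVec v).re < 0 := by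
  by_contra hc
  push_neg at hc
  refine h (Matrix.PosSemidef.of_dotProduct_mulVec_nonneg hH fun v => ?_)
  rw [herm_quad_real hH v]
  exact Complex.zero_le_real.mpr (hc v)

lemma posSemidef_vecMulVec_star {n : Type} [Fintype n] (y : n → ℂ) :
    (Matrix.vecMulVec y (star y)).PosSemidef := by
  rw [Matrix.vecMulVec_eq Unit, ← Matrix.conjTranspose_replicateCol]
  exact Matrix.posSemidef_self_mul_conjTranspose _

lemma trace_mul_vecMulVec {n : Type} [Fintype n] (M : Matrix n n ℂ) (y : n → ℂ) :
    (M * Matrix.vecMulVec y (star y)).trace = star y ⬝ᵥ M.mulVec y := by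
  simp only [Matrix.trace, Matrix.diag, Matrix.mul_apply, Matrix.vecMulVec_apply,
    Pi.star_apply, dotProduct, Matrix.mulVec, Finset.mul_sum]
  refine Finset.sum_congr rfl fun i _ => Finset.sum_congr rfl fun j _ => ?_
  ring

lemma smul_one_posSemidef {n : Type} [Fintype n] [DecidableEq n] {ε : ℝ} (hε : 0 ≤ ε) :
    ((ε : ℂ) • (1 : Matrix n n ℂ)).PosSemidef := by
  rw [Matrix.smul_one_eq_diagonal]
  exact Matrix.PosSemidef.diagonal fun i => Complex.zero_le_real.mpr hε

/-! ### The Cauchy–Schwarz bound for partial transposes of rank-one projections -/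

lemma quad_ptr_bound (y v : κA × κB → ℂ) :
    ‖star v ⬝ᵥ (ptranspose (Matrix.vecMulVec y (star y))).mulVec v‖ ≤
      (∑ p, ‖y p‖ ^ 2) * (∑ p, ‖v p‖ ^ 2) := by
  classical
  set U : κB → κB → ℂ := fun a b => ∑ c : κA, v (c, a) * star (y (c, b)) with hU
  set F : (κA × κB) × (κA × κB) → ℂ :=
    fun z => star (v z.1) * (y (z.1.1, z.2.2) * star (y (z.2.1, z.1.2)) * v z.2) with hF
  have step1 : star v ⬝ᵥ (ptranspose (Matrix.vecMulVec y (star y))).mulVec v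
      = ∑ a : κB, ∑ b : κB, star (U a b) * U b a := by
    calc star v ⬝ᵥ (ptranspose (Matrix.vecMulVec y (star y))).mulVec v
        = ∑ z : (κA × κB) × (κA × κB), F z := by
          simp only [dotProduct, Matrix.mulVec, ptranspose, Matrix.vecMulVec_apply,
            Pi.star_apply, Finset.mul_sum]
          exact (Fintype.sum_prod_type F).symm
      _ = ∑ z : (κB × κB) × (κA × κA), F (eQuad κA κB z) :=
          (Equiv.sum_comp (eQuad κA κB) F).symm
      _ = ∑ ab : κB × κB, ∑ cd : κA × κA, F (eQuad κA κB (ab, cd)) :=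
          Fintype.sum_prod_type (fun z : (κB × κB) × (κA × κA) => F (eQuad κA κB z))
      _ = ∑ ab : κB × κB, star (U ab.1 ab.2) * U ab.2 ab.1 := by
          refine Finset.sum_congr rfl fun ab _ => ?_
          have h1 : star (U ab.1 ab.2) = ∑ c : κA, star (v (c, ab.1)) * y (c, ab.2) := by
            rw [hU]
            simp only [star_sum, star_mul', star_star]
          have h2 : U ab.2 ab.1 = ∑ d : κA, star (y (d, ab.1)) * v (d, ab.2) := by
            rw [hU]
            exact Finset.sum_congr rfl fun d _ => by ring
          rw [h1, h2, Finset.sum_mul_sum]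
          refine Eq.trans ?_ (Fintype.sum_prod_type (fun cd : κA × κA =>
            (star (v (cd.1, ab.1)) * y (cd.1, ab.2))
              * (star (y (cd.2, ab.1)) * v (cd.2, ab.2))))
          refine Finset.sum_congr rfl fun cd _ => ?_
          simp only [hF, eQuad, Equiv.coe_fn_mk]
          ring
      _ = ∑ a : κB, ∑ b : κB, star (U a b) * U b a :=
          Fintype.sum_prod_type (fun z : κB × κB => star (U z.1 z.2) * U z.2 z.1)
  rw [step1]
  have step2 : ‖∑ a : κB, ∑ b : κB, star (U a b) * U b a‖
      ≤ ∑ a : κB, ∑ b : κB, ‖U a b‖ * ‖U b a‖ := by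
    refine (norm_sum_le _ _).trans (Finset.sum_le_sum fun a _ => ?_)
    refine (norm_sum_le _ _).trans (Finset.sum_le_sum fun b _ => ?_)
    rw [norm_mul, norm_star]
  have step3 : ∑ a : κB, ∑ b : κB, ‖U a b‖ * ‖U b a‖
      ≤ ∑ a : κB, ∑ b : κB, ‖U a b‖ ^ 2 := by
    have h1 : ∑ a : κB, ∑ b : κB, ‖U a b‖ * ‖U b a‖
        ≤ ∑ a : κB, ∑ b : κB, (‖U a b‖ ^ 2 + ‖U b a‖ ^ 2) / 2 :=
      Finset.sum_le_sum fun a _ => Finset.sum_le_sum fun b _ => by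
        nlinarith [sq_nonneg (‖U a b‖ - ‖U b a‖)]
    have h2 : ∑ a : κB, ∑ b : κB, (‖U a b‖ ^ 2 + ‖U b a‖ ^ 2) / 2
        = ∑ a : κB, ∑ b : κB, ‖U a b‖ ^ 2 := by
      have e1 : ∀ a : κB, ∑ b : κB, (‖U a b‖ ^ 2 + ‖U b a‖ ^ 2) / 2
          = (∑ b : κB, ‖U a b‖ ^ 2) / 2 + (∑ b : κB, ‖U b a‖ ^ 2) / 2 := by
        intro a
        rw [Finset.sum_div, Finset.sum_div, ← Finset.sum_add_distrib]
        exact Finset.sum_congr rfl fun b _ => by ring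
      simp only [e1]
      rw [Finset.sum_add_distrib]
      have hswap : ∑ a : κB, (∑ b : κB, ‖U b a‖ ^ 2) / 2
          = ∑ a : κB, (∑ b : κB, ‖U a b‖ ^ 2) / 2 := by
        rw [← Finset.sum_div, ← Finset.sum_div, Finset.sum_comm]
      rw [hswap, ← Finset.sum_add_distrib]
      exact Finset.sum_congr rfl fun a _ => by ring
    exact h1.trans (le_of_eq h2)
  have step4 : ∑ a : κB, ∑ b : κB, ‖U a b‖ ^ 2
      ≤ (∑ p, ‖y p‖ ^ 2) * (∑ p, ‖v p‖ ^ 2) := by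
    have hptw : ∀ a b : κB, ‖U a b‖ ^ 2
        ≤ (∑ c : κA, ‖v (c, a)‖ ^ 2) * (∑ c : κA, ‖y (c, b)‖ ^ 2) := by
      intro a b
      have h1 : ‖U a b‖ ≤ ∑ c : κA, ‖v (c, a)‖ * ‖y (c, b)‖ := by
        rw [hU]
        refine (norm_sum_le _ _).trans (Finset.sum_le_sum fun c _ => ?_)
        rw [norm_mul, norm_star]
      have h2 : ‖U a b‖ ^ 2 ≤ (∑ c : κA, ‖v (c, a)‖ * ‖y (c, b)‖) ^ 2 := by
        have := norm_nonneg (U a b)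
        nlinarith [h1]
      exact h2.trans (Finset.sum_mul_sq_le_sq_mul_sq Finset.univ _ _)
    have h3 : ∑ a : κB, ∑ b : κB, ‖U a b‖ ^ 2
        ≤ ∑ a : κB, ∑ b : κB, (∑ c : κA, ‖v (c, a)‖ ^ 2) * (∑ c : κA, ‖y (c, b)‖ ^ 2) :=
      Finset.sum_le_sum fun a _ => Finset.sum_le_sum fun b _ => hptw a b
    refine h3.trans (le_of_eq ?_)
    rw [← Finset.sum_mul_sum]
    have hv : ∑ a : κB, ∑ c : κA, ‖v (c, a)‖ ^ 2 = ∑ p : κA × κB, ‖v p‖ ^ 2 := by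
      rw [Fintype.sum_prod_type, Finset.sum_comm]
    have hy : ∑ b : κB, ∑ c : κA, ‖y (c, b)‖ ^ 2 = ∑ p : κA × κB, ‖y p‖ ^ 2 := by
      rw [Fintype.sum_prod_type, Finset.sum_comm]
    rw [hv, hy, mul_comm]
  calc ‖∑ a : κB, ∑ b : κB, star (U a b) * U b a‖
      ≤ ∑ a : κB, ∑ b : κB, ‖U a b‖ * ‖U b a‖ := step2
    _ ≤ ∑ a : κB, ∑ b : κB, ‖U a b‖ ^ 2 := step3
    _ ≤ (∑ p, ‖y p‖ ^ 2) * (∑ p, ‖v p‖ ^ 2) := step4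

lemma posSemidef_one_add_ptr (y : κA × κB → ℂ) (hy : ∑ p, ‖y p‖ ^ 2 = 1) :
    ((1 : Matrix (κA × κB) (κA × κB) ℂ)
      + ptranspose (Matrix.vecMulVec y (star y))).PosSemidef := by
  have hH : ((1 : Matrix (κA × κB) (κA × κB) ℂ)
      + ptranspose (Matrix.vecMulVec y (star y))).IsHermitian :=
    Matrix.isHermitian_one.add
      (ptranspose_isHermitian (posSemidef_vecMulVec_star y).isHermitian)
  refine Matrix.PosSemidef.of_dotProduct_mulVec_nonneg hH fun v => ?_
  rw [herm_quad_real hH v, Complex.zero_le_real]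
  have expand : star v ⬝ᵥ ((1 : Matrix (κA × κB) (κA × κB) ℂ)
        + ptranspose (Matrix.vecMulVec y (star y))).mulVec v
      = (star v ⬝ᵥ v) + star v ⬝ᵥ (ptranspose (Matrix.vecMulVec y (star y))).mulVec v := by
    rw [Matrix.add_mulVec, dotProduct_add, Matrix.one_mulVec]
  have h1 : (star v ⬝ᵥ v) = ((∑ p, ‖v p‖ ^ 2 : ℝ) : ℂ) := by
    simp only [dotProduct, Pi.star_apply]
    push_cast
    refine Finset.sum_congr rfl fun p _ => ?_
    rw [RCLike.star_def, mul_comm, Complex.mul_conj]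
    norm_cast
    rw [Complex.normSq_eq_norm_sq]
  set q := star v ⬝ᵥ (ptranspose (Matrix.vecMulVec y (star y))).mulVec v with hq
  have hbound : ‖q‖ ≤ ∑ p, ‖v p‖ ^ 2 := by
    have hb := quad_ptr_bound y v
    rwa [hy, one_mul] at hb
  have hre : (star v ⬝ᵥ ((1 : Matrix (κA × κB) (κA × κB) ℂ)
        + ptranspose (Matrix.vecMulVec y (star y))).mulVec v).re
      = (∑ p, ‖v p‖ ^ 2) + q.re := by
    rw [expand, Complex.add_re, h1, Complex.ofReal_re]
  rw [hre]
  have habs : -‖q‖ ≤ q.re := by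
    have hr := Complex.abs_re_le_norm q
    cases abs_le.mp hr with
    | intro ha hb => linarith
  linarith

lemma normalize_quad {n : Type} [Fintype n] {M : Matrix n n ℂ} {v : n → ℂ}
    (hv : (star v ⬝ᵥ M.mulVec v).re < 0) :
    ∃ u : n → ℂ, (∑ p, ‖u p‖ ^ 2) = 1 ∧ (star u ⬝ᵥ M.mulVec u).re < 0 := by
  have hv0 : v ≠ 0 := by
    rintro rfl
    simp at hv
  have hs : 0 < ∑ p, ‖v p‖ ^ 2 := by
    obtain ⟨p, hp⟩ : ∃ p, v p ≠ 0 := by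
      by_contra hc
      push_neg at hc
      exact hv0 (funext hc)
    refine Finset.sum_pos' (fun i _ => by positivity)
      ⟨p, Finset.mem_univ p, pow_pos (norm_pos_iff.mpr hp) 2⟩
  set s : ℝ := ∑ p, ‖v p‖ ^ 2 with hsdef
  set c : ℝ := (Real.sqrt s)⁻¹ with hcdef
  have hc0 : 0 < c := by
    rw [hcdef]
    exact inv_pos.mpr (Real.sqrt_pos.mpr hs)
  have hc2 : c ^ 2 * s = 1 := by
    rw [hcdef, ← Real.sqrt_inv, Real.sq_sqrt (by positivity)]
    exact inv_mul_cancel₀ (ne_of_gt hs)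
  refine ⟨(c : ℂ) • v, ?_, ?_⟩
  · have hterm : ∀ p, ‖((c : ℂ) • v) p‖ ^ 2 = c ^ 2 * ‖v p‖ ^ 2 := by
      intro p
      simp only [Pi.smul_apply, smul_eq_mul, norm_mul, Complex.norm_real, mul_pow]
      rw [Real.norm_eq_abs, sq_abs]
    simp only [hterm, ← Finset.mul_sum]
    exact hc2
  · have key : star ((c : ℂ) • v) ⬝ᵥ M.mulVec ((c : ℂ) • v)
        = ((c * c : ℝ) : ℂ) * (star v ⬝ᵥ M.mulVec v) := by
      rw [star_smul, Matrix.mulVec_smul, dotProduct_smul, smul_dotProduct]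
      simp only [smul_eq_mul, RCLike.star_def, Complex.conj_ofReal, Complex.ofReal_mul]
      ring
    rw [key]
    have hre : (((c * c : ℝ) : ℂ) * (star v ⬝ᵥ M.mulVec v)).re
        = (c * c) * (star v ⬝ᵥ M.mulVec v).re := by
      rw [Complex.mul_re, Complex.ofReal_re, Complex.ofReal_im, zero_mul, sub_zero]
    rw [hre]
    exact mul_neg_of_pos_of_neg (mul_pos hc0 hc0) hv

/-! ### Products of slot matrices -/

variable {N : ℕ}

/-- The tensor product of `N` matrices, one for each slot. -/
def slotProd (M : Fin N → Matrix (κA × κB) (κA × κB) ℂ) :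
    Matrix ((Fin N → κA) × (Fin N → κB)) ((Fin N → κA) × (Fin N → κB)) ℂ :=
  Matrix.of fun p q => ∏ t, M t (p.1 t, p.2 t) (q.1 t, q.2 t)

lemma slotProd_apply (M : Fin N → Matrix (κA × κB) (κA × κB) ℂ)
    (p q : (Fin N → κA) × (Fin N → κB)) :
    slotProd M p q = ∏ t, M t (p.1 t, p.2 t) (q.1 t, q.2 t) := rfl

lemma ptranspose_slotProd (M : Fin N → Matrix (κA × κB) (κA × κB) ℂ) :
    ptranspose (slotProd M) = slotProd (fun t => ptranspose (M t)) := rfl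

lemma slotProd_one : slotProd (fun _ : Fin N => (1 : Matrix (κA × κB) (κA × κB) ℂ)) = 1 := by
  ext p q
  rw [slotProd_apply]
  simp only [Matrix.one_apply]
  rw [Fintype.prod_boole]
  have hiff : (∀ t, (p.1 t, p.2 t) = (q.1 t, q.2 t)) ↔ p = q := by
    simp [Prod.ext_iff, funext_iff, forall_and]
  by_cases hpq : p = q
  · rw [if_pos (hiff.mpr hpq), if_pos hpq]
  · rw [if_neg (fun hall => hpq (hiff.mp hall)), if_neg hpq]

lemma slotProd_cons_add {m : ℕ} (X Y : Matrix (κA × κB) (κA × κB) ℂ)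
    (M : Fin m → Matrix (κA × κB) (κA × κB) ℂ) :
    slotProd (Fin.cons (X + Y) M) = slotProd (Fin.cons X M) + slotProd (Fin.cons Y M) := by
  ext p q
  simp only [slotProd_apply, Matrix.add_apply, Fin.prod_univ_succ, Fin.cons_zero, Fin.cons_succ]
  ring

lemma slotProd_posSemidef {M : Fin N → Matrix (κA × κB) (κA × κB) ℂ}
    (h : ∀ t, (M t).PosSemidef) : (slotProd M).PosSemidef := by
  classical
  have h' : ∀ t, ∃ Bt : Matrix (κA × κB) (κA × κB) ℂ, M t = Btᴴ * Bt := fun t =>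
    psd_eq_conjTranspose_mul_self (h t)
  choose S hS using h'
  let W : Matrix (Fin N → κA × κB) ((Fin N → κA) × (Fin N → κB)) ℂ :=
    Matrix.of fun c p => ∏ t, S t (c t) (p.1 t, p.2 t)
  have key : slotProd M = Wᴴ * W := by
    ext p q
    rw [slotProd_apply]
    calc ∏ t, M t (p.1 t, p.2 t) (q.1 t, q.2 t)
        = ∏ t, ∑ z : κA × κB, star (S t z (p.1 t, p.2 t)) * S t z (q.1 t, q.2 t) := by
          refine Finset.prod_congr rfl fun t _ => ?_
          rw [hS t]
          simp [Matrix.mul_apply, Matrix.conjTranspose_apply]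
      _ = ∑ c : Fin N → κA × κB,
            ∏ t, star (S t (c t) (p.1 t, p.2 t)) * S t (c t) (q.1 t, q.2 t) :=
          Fintype.prod_sum (fun t z => star (S t z (p.1 t, p.2 t)) * S t z (q.1 t, q.2 t))
      _ = ∑ c : Fin N → κA × κB,
            star (∏ t, S t (c t) (p.1 t, p.2 t)) * ∏ t, S t (c t) (q.1 t, q.2 t) := by
          refine Finset.sum_congr rfl fun c _ => ?_
          rw [star_prod, ← Finset.prod_mul_distrib]
      _ = (Wᴴ * W) p q := by
          simp [Matrix.mul_apply, Matrix.conjTranspose_apply, W]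
  rw [key]
  exact Matrix.posSemidef_conjTranspose_mul_self W

lemma slotProd_one_add_sub_posSemidef {K : Fin N → Matrix (κA × κB) (κA × κB) ℂ}
    (hK : ∀ t, (K t).PosSemidef) :
    (slotProd (fun t => 1 + K t) - 1).PosSemidef := by
  classical
  have hexp : slotProd (fun t => 1 + K t)
      = ∑ s : Finset (Fin N), slotProd (fun t => if t ∈ s then 1 else K t) := by
    ext p q
    rw [Matrix.sum_apply, slotProd_apply]
    simp only [Matrix.add_apply]
    rw [Fintype.prod_add]
    refine Finset.sum_congr rfl fun s _ => ?_
    rw [slotProd_apply]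
    have happ : ∀ t, (if t ∈ s then (1 : Matrix (κA × κB) (κA × κB) ℂ) else K t)
          (p.1 t, p.2 t) (q.1 t, q.2 t)
        = if t ∈ s then (1 : Matrix (κA × κB) (κA × κB) ℂ) (p.1 t, p.2 t) (q.1 t, q.2 t)
          else K t (p.1 t, p.2 t) (q.1 t, q.2 t) := fun t => by
      split_ifs <;> rfl
    simp only [happ]
    rw [Finset.prod_ite]
    congr 1
    · refine Finset.prod_congr ?_ fun _ _ => rfl
      simp
    · refine Finset.prod_congr ?_ fun _ _ => rfl
      simp [Finset.filter_not, Finset.compl_eq_univ_sdiff]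
  have huniv : slotProd (fun t : Fin N =>
      if t ∈ (Finset.univ : Finset (Fin N)) then (1 : Matrix (κA × κB) (κA × κB) ℂ)
        else K t) = 1 := by
    rw [show (fun t : Fin N => if t ∈ (Finset.univ : Finset (Fin N))
        then (1 : Matrix (κA × κB) (κA × κB) ℂ) else K t)
      = fun _ : Fin N => (1 : Matrix (κA × κB) (κA × κB) ℂ) from funext fun t => by simp]
    exact slotProd_one
  have hsplit : slotProd (fun t => 1 + K t) - 1
      = ∑ s ∈ (Finset.univ : Finset (Finset (Fin N))).erase Finset.univ,
          slotProd (fun t => if t ∈ s then 1 else K t) := by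
    rw [hexp, ← Finset.add_sum_erase _ _ (Finset.mem_univ (Finset.univ : Finset (Fin N))),
      huniv]
    abel
  rw [hsplit]
  refine Finset.sum_induction _ _ (fun a b ha hb => ha.add hb) Matrix.PosSemidef.zero
    (fun s _ => slotProd_posSemidef fun t => ?_)
  by_cases hts : t ∈ s
  · simp only [hts, if_true]
    exact Matrix.PosSemidef.one
  · simp only [hts, if_false]
    exact hK t

/-! ### Choi matrices of sums, transposes and tensor powers -/

lemma choi_add (L₁ L₂ : Matrix κA κA ℂ →ₗ[ℂ] Matrix κB κB ℂ) :
    choi (L₁ + L₂) = choi L₁ + choi L₂ := by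
  ext p q
  simp [choi]

lemma choi_transpose (L : Matrix κA κA ℂ →ₗ[ℂ] Matrix κB κB ℂ) :
    choi (transposeMap κB ∘ₗ L) = ptranspose (choi L) := by
  ext p q
  simp [choi, transposeMap, ptranspose, Matrix.transpose_apply, LinearMap.comp_apply,
    LinearMap.coe_mk, AddHom.coe_mk]

lemma choi_pow_apply (P : Matrix κA κA ℂ →ₗ[ℂ] Matrix κB κB ℂ)
    (p q : (Fin N → κA) × (Fin N → κB)) :
    choi (mapTensorPow P N) p q = ∏ t, choi P (p.1 t, p.2 t) (q.1 t, q.2 t) := by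
  classical
  show (mapTensorPow P N) (Matrix.single p.1 q.1 1) p.2 q.2 = _
  simp only [mapTensorPow, mapTensorFamily, LinearMap.coe_mk, AddHom.coe_mk]
  show (∑ i : Fin N → κA, ∑ j : Fin N → κA, Matrix.single p.1 q.1 (1 : ℂ) i j *
    ∏ t, P (Matrix.single (i t) (j t) 1) (p.2 t) (q.2 t)) = _
  rw [Finset.sum_eq_single p.1]
  · rw [Finset.sum_eq_single q.1]
    · have hone : Matrix.single p.1 q.1 (1 : ℂ) p.1 q.1 = 1 := by
        simp [Matrix.single]
      rw [hone, one_mul]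
      rfl
    · intro j _ hj
      have hzero : Matrix.single p.1 q.1 (1 : ℂ) p.1 j = 0 := by
        simp [Matrix.single, Ne.symm hj]
      rw [hzero, zero_mul]
    · intro hmem
      exact absurd (Finset.mem_univ _) hmem
  · intro i _ hi
    refine Finset.sum_eq_zero fun j _ => ?_
    have hzero : Matrix.single p.1 q.1 (1 : ℂ) i j = 0 := by
      simp [Matrix.single, Ne.symm hi]
    rw [hzero, zero_mul]
  · intro hmem
    exact absurd (Finset.mem_univ _) hmem

lemma trace_choiPow_mul_slotProd (P : Matrix κA κA ℂ →ₗ[ℂ] Matrix κB κB ℂ)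
    (M : Fin N → Matrix (κA × κB) (κA × κB) ℂ) :
    (choi (mapTensorPow P N) * slotProd M).trace = ∏ t, (choi P * M t).trace := by
  classical
  calc (choi (mapTensorPow P N) * slotProd M).trace
      = ∑ p : (Fin N → κA) × (Fin N → κB), ∑ q : (Fin N → κA) × (Fin N → κB),
          ∏ t, (choi P (p.1 t, p.2 t) (q.1 t, q.2 t)
            * M t (q.1 t, q.2 t) (p.1 t, p.2 t)) := by
        simp only [Matrix.trace, Matrix.diag, Matrix.mul_apply]
        refine Finset.sum_congr rfl fun p _ => Finset.sum_congr rfl fun q _ => ?_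
        rw [choi_pow_apply, slotProd_apply, ← Finset.prod_mul_distrib]
    _ = ∑ z : ((Fin N → κA) × (Fin N → κB)) × ((Fin N → κA) × (Fin N → κB)),
          ∏ t, (choi P (z.1.1 t, z.1.2 t) (z.2.1 t, z.2.2 t)
            * M t (z.2.1 t, z.2.2 t) (z.1.1 t, z.1.2 t)) :=
        (Fintype.sum_prod_type (fun z : ((Fin N → κA) × (Fin N → κB))
            × ((Fin N → κA) × (Fin N → κB)) =>
          ∏ t, (choi P (z.1.1 t, z.1.2 t) (z.2.1 t, z.2.2 t)
            * M t (z.2.1 t, z.2.2 t) (z.1.1 t, z.1.2 t)))).symm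
    _ = ∑ F : Fin N → ((κA × κB) × (κA × κB)),
          ∏ t, (choi P (F t).1 (F t).2 * M t (F t).2 (F t).1) :=
        Fintype.sum_equiv (eFam N κA κB) _ _ fun z => rfl
    _ = ∏ t, ∑ z : (κA × κB) × (κA × κB), choi P z.1 z.2 * M t z.2 z.1 :=
        (Fintype.prod_sum (fun t (z : (κA × κB) × (κA × κB)) =>
          choi P z.1 z.2 * M t z.2 z.1)).symm
    _ = ∏ t, (choi P * M t).trace := by
        refine Finset.prod_congr rfl fun t _ => ?_
        rw [Fintype.sum_prod_type]
        simp only [Matrix.trace, Matrix.diag, Matrix.mul_apply]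

lemma pairing_nonneg (P : Matrix κA κA ℂ →ₗ[ℂ] Matrix κB κB ℂ)
    (hdec : IsDecomposable (mapTensorPow P N))
    {ρ : Matrix ((Fin N → κA) × (Fin N → κB)) ((Fin N → κA) × (Fin N → κB)) ℂ}
    (h1 : ρ.PosSemidef) (h2 : (ptranspose ρ).PosSemidef) :
    0 ≤ (choi (mapTensorPow P N) * ρ).trace := by
  obtain ⟨T₁, T₂, hT₁, hT₂, heq⟩ := hdec
  rw [heq, choi_add, choi_transpose, Matrix.add_mul, Matrix.trace_add]
  have hswap : (ptranspose (choi T₂) * ρ).trace = (choi T₂ * ptranspose ρ).trace :=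
    (trace_mul_ptranspose _ _).symm
  rw [hswap]
  exact add_nonneg (psd_trace_mul_nonneg hT₁ h1) (psd_trace_mul_nonneg hT₂ h2)

end Aux

theorem stmt0 (dA dB : ℕ) (hA : 1 ≤ dA) (hB : 1 ≤ dB)
    (P : Matrix (Fin dA) (Fin dA) ℂ →ₗ[ℂ] Matrix (Fin dB) (Fin dB) ℂ)
    (h : ∀ n : ℕ, IsDecomposable (mapTensorPow P n)) :
    IsCompletelyPositive P ∨ IsCompletelyCopositive P := by
  classical
  by_contra hcon
  push_neg at hcon
  obtain ⟨hcp, hccp⟩ := hcon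
  have hcp' : ¬ (choi P).PosSemidef := hcp
  have hccp' : ¬ (ptranspose (choi P)).PosSemidef := by
    intro hpsd
    exact hccp (by rw [IsCompletelyCopositive, IsCompletelyPositive, choi_transpose]; exact hpsd)
  -- Hermitian-ness of the Choi matrix, from decomposability of the first tensor power
  have hherm1 : (choi (mapTensorPow P 1)).IsHermitian := by
    obtain ⟨T₁, T₂, hT₁, hT₂, heq⟩ := h 1
    rw [heq, choi_add, choi_transpose]
    exact Matrix.IsHermitian.add hT₁.isHermitian (ptranspose_isHermitian hT₂.isHermitian)
  have hkey : ∀ p q : Fin dA × Fin dB, choi P p q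
      = choi (mapTensorPow P 1) ((fun _ => p.1, fun _ => p.2)) ((fun _ => q.1, fun _ => q.2)) := by
    intro p q
    rw [choi_pow_apply, Fin.prod_univ_one]
  have hCherm : (choi P).IsHermitian := by
    ext p q
    rw [Matrix.conjTranspose_apply, hkey q p, hkey p q]
    exact hherm1.apply _ _
  have hptrherm : (ptranspose (choi P)).IsHermitian := ptranspose_isHermitian hCherm
  -- negative directions, normalized
  obtain ⟨x₀, hx₀⟩ := exists_neg_quad hCherm hcp'
  obtain ⟨y₀, hy₀⟩ := exists_neg_quad hptrherm hccp'
  obtain ⟨x, hx1, hx2⟩ := normalize_quad hx₀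
  obtain ⟨y, hy1, hy2⟩ := normalize_quad hy₀
  set a : ℝ := -((star x ⬝ᵥ (choi P).mulVec x).re) with hadef
  have ha0 : 0 < a := by rw [hadef]; linarith
  have hqx : star x ⬝ᵥ (choi P).mulVec x = ((-a : ℝ) : ℂ) := by
    rw [herm_quad_real hCherm x, hadef, neg_neg]
  set b : ℝ := -((star y ⬝ᵥ (ptranspose (choi P)).mulVec y).re) with hbdef
  have hb0 : 0 < b := by rw [hbdef]; linarith
  have hqy : star y ⬝ᵥ (ptranspose (choi P)).mulVec y = ((-b : ℝ) : ℂ) := by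
    rw [herm_quad_real hptrherm y, hbdef, neg_neg]
  -- the trace of the Choi matrix is real
  set T : ℝ := ((choi P).trace).re with hTdef
  have hTreal : (choi P).trace = ((T : ℝ) : ℂ) := by
    have hstar : (starRingEnd ℂ) ((choi P).trace) = (choi P).trace := by
      have h1 : star ((choi P).trace) = (choi P).trace := by
        rw [← Matrix.trace_conjTranspose, hCherm.eq]
      exact h1
    rw [hTdef]
    exact (Complex.conj_eq_iff_re.mp hstar).symm
  -- the slot operator w = 1 + Γ(yy*)
  set w : Matrix (Fin dA × Fin dB) (Fin dA × Fin dB) ℂ :=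
    (1 : Matrix (Fin dA × Fin dB) (Fin dA × Fin dB) ℂ)
      + ptranspose (Matrix.vecMulVec y (star y)) with hwdef
  have hwpsd : w.PosSemidef := posSemidef_one_add_ptr y hy1
  have hCw : ((choi P) * w).trace = ((T - b : ℝ) : ℂ) := by
    rw [hwdef, Matrix.mul_add, Matrix.trace_add, Matrix.mul_one, trace_mul_ptranspose,
      trace_mul_vecMulVec, hqy, hTreal]
    push_cast
    ring
  -- f = T - b is nonnegative (single copy pairing)
  have hptrw : ptranspose w = 1 + Matrix.vecMulVec y (star y) := by
    rw [hwdef, ptranspose_add, ptranspose_one, ptranspose_ptranspose]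
  have hfpair : (0:ℂ) ≤ ((T - b : ℝ) : ℂ) := by
    have hρpsd : (slotProd (fun _ : Fin 1 => w)).PosSemidef :=
      slotProd_posSemidef fun _ => hwpsd
    have hptrρ : (ptranspose (slotProd (fun _ : Fin 1 => w))).PosSemidef := by
      rw [ptranspose_slotProd]
      refine slotProd_posSemidef fun _ => ?_
      rw [hptrw]
      exact Matrix.PosSemidef.one.add (posSemidef_vecMulVec_star y)
    have hp := pairing_nonneg P (h 1) hρpsd hptrρ
    rwa [trace_choiPow_mul_slotProd, Fin.prod_univ_one, hCw] at hp
  have hf0 : 0 ≤ T - b := Complex.zero_le_real.mp hfpair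
  have hT0 : 0 < T := by linarith
  have hfT : T - b < T := by linarith
  -- choose the number of copies
  obtain ⟨m, hm⟩ := exists_pow_lt_of_lt_one (x := a / (2 * T)) (y := (T - b) / T)
    (by positivity) (by rw [div_lt_one hT0]; linarith)
  set ε : ℝ := a / (2 * T) with hεdef
  have hε0 : 0 ≤ ε := by rw [hεdef]; positivity
  set Xm : Matrix (Fin dA × Fin dB) (Fin dA × Fin dB) ℂ :=
    Matrix.vecMulVec x (star x)
      + (ε : ℂ) • (1 : Matrix (Fin dA × Fin dB) (Fin dA × Fin dB) ℂ) with hXmdef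
  have hXmpsd : Xm.PosSemidef := (posSemidef_vecMulVec_star x).add (smul_one_posSemidef hε0)
  have hCX : ((choi P) * Xm).trace = ((-a + ε * T : ℝ) : ℂ) := by
    rw [hXmdef, Matrix.mul_add, Matrix.trace_add, Matrix.mul_smul, Matrix.trace_smul,
      Matrix.mul_one, trace_mul_vecMulVec, hqx, hTreal, smul_eq_mul]
    push_cast
    ring
  -- the PPT witness ρ on m+1 copies
  set ρ : Matrix ((Fin (m+1) → Fin dA) × (Fin (m+1) → Fin dB))
      ((Fin (m+1) → Fin dA) × (Fin (m+1) → Fin dB)) ℂ :=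
    slotProd (Fin.cons 1 (fun _ : Fin m => w))
      + slotProd (Fin.cons Xm (fun _ : Fin m => 1)) with hρdef
  have hρpsd : ρ.PosSemidef := by
    rw [hρdef]
    refine (slotProd_posSemidef ?_).add (slotProd_posSemidef ?_)
    · intro t
      refine Fin.cases ?_ ?_ t
      · rw [Fin.cons_zero]; exact Matrix.PosSemidef.one
      · intro i; rw [Fin.cons_succ]; exact hwpsd
    · intro t
      refine Fin.cases ?_ ?_ t
      · rw [Fin.cons_zero]; exact hXmpsd
      · intro i; rw [Fin.cons_succ]; exact Matrix.PosSemidef.one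
  have hptrρpsd : (ptranspose ρ).PosSemidef := by
    set Ky : Fin (m+1) → Matrix (Fin dA × Fin dB) (Fin dA × Fin dB) ℂ :=
      Fin.cons 0 (fun _ : Fin m => Matrix.vecMulVec y (star y)) with hKy
    rw [hρdef, ptranspose_add, ptranspose_slotProd, ptranspose_slotProd]
    have e1 : (fun t => ptranspose ((Fin.cons (1 : Matrix (Fin dA × Fin dB) (Fin dA × Fin dB) ℂ)
          (fun _ : Fin m => w) : Fin (m+1) → Matrix (Fin dA × Fin dB) (Fin dA × Fin dB) ℂ) t))
        = fun t : Fin (m+1) => (1 : Matrix (Fin dA × Fin dB) (Fin dA × Fin dB) ℂ)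
            + Ky t := by
      funext t
      refine Fin.cases ?_ ?_ t
      · rw [hKy]
        rw [Fin.cons_zero, Fin.cons_zero, ptranspose_one, add_zero]
      · intro i
        rw [hKy]
        rw [Fin.cons_succ, Fin.cons_succ, hptrw]
    have e2 : (fun t => ptranspose ((Fin.cons Xm
          (fun _ : Fin m => (1 : Matrix (Fin dA × Fin dB) (Fin dA × Fin dB) ℂ))
            : Fin (m+1) → Matrix (Fin dA × Fin dB) (Fin dA × Fin dB) ℂ) t))
        = Fin.cons (ptranspose Xm)
            (fun _ : Fin m => (1 : Matrix (Fin dA × Fin dB) (Fin dA × Fin dB) ℂ)) := by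
      funext t
      refine Fin.cases ?_ ?_ t
      · rw [Fin.cons_zero, Fin.cons_zero]
      · intro i; rw [Fin.cons_succ, Fin.cons_succ, ptranspose_one]
    have hE : slotProd (fun t => ptranspose ((Fin.cons
            (1 : Matrix (Fin dA × Fin dB) (Fin dA × Fin dB) ℂ) (fun _ : Fin m => w)
            : Fin (m+1) → Matrix (Fin dA × Fin dB) (Fin dA × Fin dB) ℂ) t))
          + slotProd (fun t => ptranspose ((Fin.cons Xm
            (fun _ : Fin m => (1 : Matrix (Fin dA × Fin dB) (Fin dA × Fin dB) ℂ))
            : Fin (m+1) → Matrix (Fin dA × Fin dB) (Fin dA × Fin dB) ℂ) t))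
        = slotProd (fun t : Fin (m+1) =>
            (1 : Matrix (Fin dA × Fin dB) (Fin dA × Fin dB) ℂ) + Ky t)
          + slotProd (Fin.cons (ptranspose Xm)
            (fun _ : Fin m => (1 : Matrix (Fin dA × Fin dB) (Fin dA × Fin dB) ℂ))) := by
      rw [congrArg slotProd e1, congrArg slotProd e2]
    rw [hE]
    have h1 : (slotProd (fun t : Fin (m+1) =>
          (1 : Matrix (Fin dA × Fin dB) (Fin dA × Fin dB) ℂ)
            + Ky t)
        - 1).PosSemidef := by
      refine slotProd_one_add_sub_posSemidef fun t => ?_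
      refine Fin.cases ?_ ?_ t
      · rw [hKy, Fin.cons_zero]; exact Matrix.PosSemidef.zero
      · intro i; rw [hKy, Fin.cons_succ]; exact posSemidef_vecMulVec_star y
    have h2 : (slotProd (Fin.cons (ptranspose Xm)
          (fun _ : Fin m => (1 : Matrix (Fin dA × Fin dB) (Fin dA × Fin dB) ℂ))) + 1).PosSemidef := by
      have hsum : slotProd (Fin.cons (ptranspose Xm)
            (fun _ : Fin m => (1 : Matrix (Fin dA × Fin dB) (Fin dA × Fin dB) ℂ)))
            + (1 : Matrix ((Fin (m+1) → Fin dA) × (Fin (m+1) → Fin dB)) _ ℂ)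
          = slotProd (Fin.cons (ptranspose Xm + 1)
            (fun _ : Fin m => (1 : Matrix (Fin dA × Fin dB) (Fin dA × Fin dB) ℂ))) := by
        rw [slotProd_cons_add]
        have hones : (Fin.cons (1 : Matrix (Fin dA × Fin dB) (Fin dA × Fin dB) ℂ)
            (fun _ : Fin m => (1 : Matrix (Fin dA × Fin dB) (Fin dA × Fin dB) ℂ))
            : Fin (m+1) → Matrix (Fin dA × Fin dB) (Fin dA × Fin dB) ℂ)
          = fun _ : Fin (m+1) => (1 : Matrix (Fin dA × Fin dB) (Fin dA × Fin dB) ℂ) :=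
          funext fun t => Fin.cases rfl (fun _ => rfl) t
        rw [congrArg slotProd hones, slotProd_one]
      rw [hsum]
      refine slotProd_posSemidef fun t => ?_
      refine Fin.cases ?_ ?_ t
      · rw [Fin.cons_zero]
        have hXmptr : ptranspose Xm + 1
            = ((1 : Matrix (Fin dA × Fin dB) (Fin dA × Fin dB) ℂ)
                + ptranspose (Matrix.vecMulVec x (star x)))
              + (ε : ℂ) • (1 : Matrix (Fin dA × Fin dB) (Fin dA × Fin dB) ℂ) := by
          rw [hXmdef, ptranspose_add, ptranspose_smul, ptranspose_one]
          abel
        rw [hXmptr]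
        exact (posSemidef_one_add_ptr x hx1).add (smul_one_posSemidef hε0)
      · intro i; rw [Fin.cons_succ]; exact Matrix.PosSemidef.one
    have hrearr : slotProd (fun t : Fin (m+1) =>
          (1 : Matrix (Fin dA × Fin dB) (Fin dA × Fin dB) ℂ)
            + Ky t)
          + slotProd (Fin.cons (ptranspose Xm)
            (fun _ : Fin m => (1 : Matrix (Fin dA × Fin dB) (Fin dA × Fin dB) ℂ)))
        = (slotProd (fun t : Fin (m+1) =>
            (1 : Matrix (Fin dA × Fin dB) (Fin dA × Fin dB) ℂ)
              + Ky t) - 1)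
          + (slotProd (Fin.cons (ptranspose Xm)
            (fun _ : Fin m => (1 : Matrix (Fin dA × Fin dB) (Fin dA × Fin dB) ℂ))) + 1) := by
      abel
    rw [hrearr]
    exact h1.add h2
  -- compute the pairing
  have hcompute : (choi (mapTensorPow P (m+1)) * ρ).trace
      = ((T * (T - b)^m + (-a + ε * T) * T^m : ℝ) : ℂ) := by
    rw [hρdef, Matrix.mul_add, Matrix.trace_add, trace_choiPow_mul_slotProd,
      trace_choiPow_mul_slotProd, Fin.prod_univ_succ, Fin.prod_univ_succ]
    simp only [Fin.cons_zero, Fin.cons_succ]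
    rw [Matrix.mul_one, hCw, hCX, hTreal, Finset.prod_const, Finset.prod_const,
      Finset.card_univ, Fintype.card_fin]
    push_cast
    ring
  have hpair := pairing_nonneg P (h (m+1)) hρpsd hptrρpsd
  rw [hcompute] at hpair
  have hreal : (0:ℝ) ≤ T * (T - b)^m + (-a + ε * T) * T^m := Complex.zero_le_real.mp hpair
  have hεT : (-a + ε * T) * T^m = -(a/2) * T^m := by
    have : ε * T = a / 2 := by
      rw [hεdef]
      field_simp
    rw [this]
    ring
  have hTfm : T * (T - b)^m < (a/2) * T^m := by
    have hTm : (0:ℝ) < T^m := by positivity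
    have hfm : (T - b)^m = ((T - b)/T)^m * T^m := by
      rw [div_pow, div_mul_cancel₀]
      exact ne_of_gt hTm
    calc T * (T - b)^m = ((T - b)/T)^m * (T * T^m) := by rw [hfm]; ring
      _ < (a/(2*T)) * (T * T^m) := by
          refine mul_lt_mul_of_pos_right hm ?_
          positivity
      _ = (a/2) * T^m := by
          field_simp
  rw [hεT] at hreal
  nlinarith [hreal, hTfm]

end TensorDecomp
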